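/- Let g, ĝ, g̃ be symmetric 4×4 real matrices, f̂, f̃ antisymmetric 4×4 real matrices, Ĝ = ĝ + f̂, G̃ = g̃ + f̃. Suppose l ∈ ℝ⁴ satisfies lᵀgl = 0 and there is α ∈ ℝ with G̃ᵀl = α·(gl) (i.e., l_cG̃^{cq} = α·l^q, the degenerate characteristic condition of Case 2). Then P(l)·v = 0 for every v ∈ ℝ⁴ with (gl)ᵀv = 0; in particular, if gl ≠ 0 the kernel of the principal symbol P(l) = (lᵀgl)·g − (gl)(gl)ᵀ + (Ĝl)(G̃ᵀl)ᵀ has dimension at least 3. -/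

import Mathlib

open Matrix Module

namespace Matrix

variable {n R K : Type*} [Fintype n]

def principalSymbol [CommRing R] (g Ghat Gtil : Matrix n n R) (l : n → R) : Matrix n n R :=
  (l ⬝ᵥ g *ᵥ l) • g - vecMulVec (g *ᵥ l) (g *ᵥ l) + vecMulVec (Ghat *ᵥ l) (Gtilᵀ *ᵥ l)

theorem principalSymbol_mulVec_eq_zero [CommRing R] {g Ghat Gtil : Matrix n n R} {l v : n → R}
    {α : R} (hl : l ⬝ᵥ g *ᵥ l = 0) (hdeg : Gtilᵀ *ᵥ l = α • g *ᵥ l) (hv : g *ᵥ l ⬝ᵥ v = 0) :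
    principalSymbol g Ghat Gtil l *ᵥ v = 0 := by
  rw [principalSymbol, hl, zero_smul, add_mulVec, sub_mulVec, zero_mulVec, vecMulVec_mulVec,
    vecMulVec_mulVec, hdeg, smul_dotProduct, hv]
  simp

theorem card_sub_one_le_finrank_ker_mulVecLin [Field K] [DecidableEq n] {M : Matrix n n K}
    {a : n → K} (ha : a ≠ 0) (hM : ∀ v, a ⬝ᵥ v = 0 → M *ᵥ v = 0) :
    Fintype.card n - 1 ≤ finrank K (LinearMap.ker M.mulVecLin) := by
  have hφ : dotProductEquiv K n a ≠ 0 := (LinearEquiv.map_ne_zero_iff _).mpr ha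
  have hdim := Dual.finrank_ker_add_one_of_ne_zero hφ
  rw [finrank_fintype_fun_eq_card] at hdim
  calc Fintype.card n - 1 = finrank K (LinearMap.ker (dotProductEquiv K n a)) := by omega
    _ ≤ _ := Submodule.finrank_mono fun v hv => hM v hv

end Matrix

theorem principalSymbol_degenerate_kernel_general
    (g ghat gtil fhat ftil : Matrix (Fin 4) (Fin 4) ℝ)
    (l : Fin 4 → ℝ)
    (hl : l ⬝ᵥ g.mulVec l = 0)
    (α : ℝ) (hdeg : (gtil + ftil)ᵀ.mulVec l = α • g.mulVec l) :
    (∀ v : Fin 4 → ℝ, g.mulVec l ⬝ᵥ v = 0 →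
      ((l ⬝ᵥ g.mulVec l) • g - Matrix.vecMulVec (g.mulVec l) (g.mulVec l) +
          Matrix.vecMulVec ((ghat + fhat).mulVec l) ((gtil + ftil)ᵀ.mulVec l)).mulVec v = 0) ∧
    (g.mulVec l ≠ 0 →
      3 ≤ Module.finrank ℝ
        (LinearMap.ker
          ((l ⬝ᵥ g.mulVec l) • g - Matrix.vecMulVec (g.mulVec l) (g.mulVec l) +
            Matrix.vecMulVec ((ghat + fhat).mulVec l)
              ((gtil + ftil)ᵀ.mulVec l)).mulVecLin)) := by
  have hker (v : Fin 4 → ℝ) (hv : g *ᵥ l ⬝ᵥ v = 0) :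
      principalSymbol g (ghat + fhat) (gtil + ftil) l *ᵥ v = 0 :=
    principalSymbol_mulVec_eq_zero hl hdeg hv
  exact ⟨hker, fun hgl => card_sub_one_le_finrank_ker_mulVecLin hgl hker⟩

/-- if `l` is `g`-null (`lᵀgl = 0`) and `G̃ᵀl = α·(gl)` for some
real `α` (the degenerate characteristic condition of Case 2), then every `v`
with `(gl)ᵀv = 0` lies in the kernel of the principal symbol
`P(l) = (lᵀgl)·g − (gl)(gl)ᵀ + (Ĝl)(G̃ᵀl)ᵀ`; in particular, if `gl ≠ 0` this
kernel has dimension at least 3. Here `Ĝ = ĝ + f̂`, `G̃ = g̃ + f̃`. -/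
theorem principalSymbol_degenerate_kernel
    (g ghat gtil fhat ftil : Matrix (Fin 4) (Fin 4) ℝ)
    (hg : gᵀ = g) (hghat : ghatᵀ = ghat) (hgtil : gtilᵀ = gtil)
    (hfhat : fhatᵀ = -fhat) (hftil : ftilᵀ = -ftil) (l : Fin 4 → ℝ)
    (hl : l ⬝ᵥ g.mulVec l = 0)
    (α : ℝ) (hdeg : (gtil + ftil)ᵀ.mulVec l = α • g.mulVec l) :
    (∀ v : Fin 4 → ℝ, g.mulVec l ⬝ᵥ v = 0 →
      ((l ⬝ᵥ g.mulVec l) • g - Matrix.vecMulVec (g.mulVec l) (g.mulVec l) +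
          Matrix.vecMulVec ((ghat + fhat).mulVec l) ((gtil + ftil)ᵀ.mulVec l)).mulVec v = 0) ∧
    (g.mulVec l ≠ 0 →
      3 ≤ Module.finrank ℝ
        (LinearMap.ker
          ((l ⬝ᵥ g.mulVec l) • g - Matrix.vecMulVec (g.mulVec l) (g.mulVec l) +
            Matrix.vecMulVec ((ghat + fhat).mulVec l)
              ((gtil + ftil)ᵀ.mulVec l)).mulVecLin)) :=
  principalSymbol_degenerate_kernel_general g ghat gtil fhat ftil l hl α hdeg
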